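/- Let V be a positive random variable with E[V] = 1 and geometric expectation exp(E[log V]) = 1 - δ with 0 < δ < 1. Then the optimal seller revenue u(V) = sup_{p>0} p·P(V>p) satisfies u(V) ≥ 1 - 2^{4/3}·δ^{1/3}. -/

import Mathlib

/-!
Apply Markov's inequality to the nonnegative variable `V - 1 - log V`, whose mean is
`-log (1 - δ) ≤ 32δ/27` in the only nontrivial range `16δ < 1`. Since
`x - 1 - log x ≥ (1 - x)² / 2` on `(0, 1]`, this bounds the probability of `V ≤ 1 - t`
by `2 · (32δ/27) / t²`. Selling at price `1 - t` with `t = (2/3) (16δ)^{1/3}` then earns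
at least `1 - (16δ)^{1/3} = 1 - 2^{4/3} δ^{1/3}`.
-/

open MeasureTheory

namespace Real

lemma one_sub_sq_div_two_le_sub_one_sub_log {x : ℝ} (hx : 0 < x) (hx1 : x ≤ 1) :
    (1 - x) ^ 2 / 2 ≤ x - 1 - log x := by
  let g : ℝ → ℝ := fun y => y - 1 - log y - (1 - y) ^ 2 / 2
  have hg : ∀ y, 0 < y → HasDerivAt g (-((1 - y) ^ 2 / y)) y := by
    intro y hy
    refine ((((hasDerivAt_id y).sub_const 1).sub (hasDerivAt_log hy.ne')).sub
      ((((hasDerivAt_id y).const_sub 1).pow 2).div_const 2)).congr_deriv ?_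
    simp only [id]
    field_simp
    ring
  have hanti : AntitoneOn g (Set.Ioc 0 1) := by
    refine antitoneOn_of_hasDerivWithinAt_nonpos (convex_Ioc 0 1)
      (fun y hy => (hg y hy.1).continuousAt.continuousWithinAt)
      (fun y hy => (hg y (interior_subset hy).1).hasDerivWithinAt) fun y hy => ?_
    have : 0 < y := (interior_subset hy).1
    exact neg_nonpos.2 (by positivity)
  have := hanti ⟨hx, hx1⟩ ⟨one_pos, le_rfl⟩ hx1
  simp only [g, log_one] at this
  linarith

lemma neg_log_one_sub_le {δ : ℝ} (hδ0 : 0 ≤ δ) (hδ : 32 * δ ≤ 5) :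
    -log (1 - δ) ≤ 32 / 27 * δ := by
  have hδ1 : 0 < 1 - δ := by linarith
  have hinv : (1 - δ)⁻¹ ≤ 1 + 32 / 27 * δ := by
    rw [inv_le_iff_one_le_mul₀ hδ1]
    nlinarith
  linarith [one_sub_inv_le_log_of_pos hδ1]

end Real

section Revenue

variable {Ω : Type*} [MeasurableSpace Ω] {μ : Measure Ω} {V : Ω → ℝ}

lemma one_sub_sq_div_two_mul_measureReal_le [IsProbabilityMeasure μ]
    (hpos : ∀ᵐ ω ∂μ, 0 < V ω) (hVint : Integrable V μ)
    (hlogint : Integrable (fun ω => Real.log (V ω)) μ) {p : ℝ} (hp : p ≤ 1) :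
    (1 - p) ^ 2 / 2 * μ.real {ω | V ω ≤ p} ≤
      ∫ ω, V ω ∂μ - 1 - ∫ ω, Real.log (V ω) ∂μ := by
  have hint : Integrable (fun ω => V ω - 1 - Real.log (V ω)) μ :=
    (hVint.sub (integrable_const 1)).sub hlogint
  have hintegral : ∫ ω, (V ω - 1 - Real.log (V ω)) ∂μ =
      ∫ ω, V ω ∂μ - 1 - ∫ ω, Real.log (V ω) ∂μ := by
    rw [integral_sub (f := fun ω => V ω - 1) (hVint.sub (integrable_const 1)) hlogint,
      integral_sub hVint (integrable_const 1), integral_const, probReal_univ, one_smul]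
  have hnonneg : 0 ≤ᵐ[μ] fun ω => V ω - 1 - Real.log (V ω) :=
    hpos.mono fun ω hω => show 0 ≤ V ω - 1 - Real.log (V ω) by
      linarith [Real.log_le_sub_one_of_pos hω]
  have hsub : {ω | V ω ≤ p} ≤ᵐ[μ] {ω | (1 - p) ^ 2 / 2 ≤ V ω - 1 - Real.log (V ω)} :=
    hpos.mono fun ω hω (hVp : V ω ≤ p) =>
      show (1 - p) ^ 2 / 2 ≤ V ω - 1 - Real.log (V ω) by
        have : (1 - p) ^ 2 ≤ (1 - V ω) ^ 2 := by nlinarith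
        linarith [Real.one_sub_sq_div_two_le_sub_one_sub_log hω (hVp.trans hp)]
  calc (1 - p) ^ 2 / 2 * μ.real {ω | V ω ≤ p}
      ≤ (1 - p) ^ 2 / 2 * μ.real {ω | (1 - p) ^ 2 / 2 ≤ V ω - 1 - Real.log (V ω)} :=
        mul_le_mul_of_nonneg_left
          (ENNReal.toReal_mono (measure_ne_top _ _) (measure_mono_ae hsub)) (by positivity)
    _ ≤ _ := hintegral ▸ mul_meas_ge_le_integral_of_nonneg hnonneg hint _

lemma measureReal_lt_eq_one_sub [IsProbabilityMeasure μ] (hV : AEMeasurable V μ) (p : ℝ) :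
    μ.real {ω | p < V ω} = 1 - μ.real {ω | V ω ≤ p} := by
  have hs : NullMeasurableSet {ω | V ω ≤ p} μ := hV.nullMeasurable measurableSet_Iic
  rw [← probReal_compl_eq_one_sub₀ hs, Set.compl_ofPred]
  simp only [not_le]

lemma bddAbove_range_mul_measureReal_lt [IsFiniteMeasure μ] (hnonneg : 0 ≤ᵐ[μ] V)
    (hVint : Integrable V μ) :
    BddAbove (Set.range fun p : {p : ℝ // 0 < p} => (p : ℝ) * μ.real {ω | (p : ℝ) < V ω}) := by
  refine ⟨∫ ω, V ω ∂μ, ?_⟩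
  rintro _ ⟨⟨p, hp⟩, rfl⟩
  calc p * μ.real {ω | p < V ω} ≤ p * μ.real {ω | p ≤ V ω} :=
        mul_le_mul_of_nonneg_left (measureReal_mono fun ω (h : p < V ω) => h.le) hp.le
    _ ≤ ∫ ω, V ω ∂μ := mul_meas_ge_le_integral_of_nonneg hnonneg hVint p

end Revenue

theorem stmt_15_general {Ω : Type*} [MeasurableSpace Ω] (μ : Measure Ω) [IsProbabilityMeasure μ]
    (V : Ω → ℝ) (hpos : ∀ᵐ ω ∂μ, 0 < V ω)
    (hVint : Integrable V μ) (hEV : ∫ ω, V ω ∂μ = 1)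
    (hlogint : Integrable (fun ω => Real.log (V ω)) μ)
    (δ : ℝ) (hδ0 : 0 < δ)
    (hgeo : Real.exp (∫ ω, Real.log (V ω) ∂μ) = 1 - δ) :
    1 - (2:ℝ) ^ ((4:ℝ)/3) * δ ^ ((1:ℝ)/3) ≤
      ⨆ p : {p : ℝ // 0 < p}, (p : ℝ) * (μ {ω | (p : ℝ) < V ω}).toReal := by
  set c : ℝ := (2:ℝ) ^ ((4:ℝ)/3) * δ ^ ((1:ℝ)/3)
  have hc0 : 0 < c := by positivity
  have hc3 : c ^ 3 = 16 * δ := by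
    rw [mul_pow, ← Real.rpow_mul_natCast zero_le_two, ← Real.rpow_mul_natCast hδ0.le]
    norm_num
  rcases le_or_gt 1 c with hc1 | hc1
  · exact (sub_nonpos.2 hc1).trans
      (Real.iSup_nonneg fun p => mul_nonneg p.2.le ENNReal.toReal_nonneg)
  have hδ : 16 * δ < 1 := hc3 ▸ pow_lt_one₀ hc0.le hc1 (by norm_num)
  have hgap : ∫ ω, V ω ∂μ - 1 - ∫ ω, Real.log (V ω) ∂μ ≤ 2 * c ^ 3 / 27 := by
    rw [hEV, ← Real.log_exp (∫ ω, Real.log (V ω) ∂μ), hgeo, hc3]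
    linarith [Real.neg_log_one_sub_le hδ0.le (by linarith)]
  set p := 1 - 2 * c / 3 with hp
  have hq : μ.real {ω | V ω ≤ p} ≤ c / 3 := by
    have := (one_sub_sq_div_two_mul_measureReal_le hpos hVint hlogint (p := p)
      (by linarith)).trans hgap
    rw [hp] at this
    nlinarith
  calc 1 - c ≤ p * (1 - c / 3) := by nlinarith
    _ ≤ p * (1 - μ.real {ω | V ω ≤ p}) := by gcongr; linarith
    _ = p * μ.real {ω | p < V ω} := by rw [measureReal_lt_eq_one_sub hVint.aemeasurable]
    _ ≤ _ := le_ciSup (bddAbove_range_mul_measureReal_lt (hpos.mono fun _ h => h.le) hVint)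
        (⟨p, by linarith⟩ : {p : ℝ // 0 < p})

/-- If `V` is positive with `E[V] = 1` and geometric expectation `1 - δ`, `0 < δ < 1`,
then the optimal seller revenue satisfies `u(V) ≥ 1 - 2^{4/3}·δ^{1/3}`. -/
theorem stmt_15 {Ω : Type*} [MeasurableSpace Ω] (μ : Measure Ω) [IsProbabilityMeasure μ]
    (V : Ω → ℝ) (hV : Measurable V) (hpos : ∀ᵐ ω ∂μ, 0 < V ω)
    (hVint : Integrable V μ) (hEV : ∫ ω, V ω ∂μ = 1)
    (hlogint : Integrable (fun ω => Real.log (V ω)) μ)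
    (δ : ℝ) (hδ0 : 0 < δ) (hδ1 : δ < 1)
    (hgeo : Real.exp (∫ ω, Real.log (V ω) ∂μ) = 1 - δ) :
    1 - (2:ℝ) ^ ((4:ℝ)/3) * δ ^ ((1:ℝ)/3) ≤
      ⨆ p : {p : ℝ // 0 < p}, (p : ℝ) * (μ {ω | (p : ℝ) < V ω}).toReal :=
  stmt_15_general μ V hpos hVint hEV hlogint δ hδ0 hgeo
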